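/- arXiv:2303.13973 — 2 statements merged into one kernel-verified Lean document; each statement's English description precedes it below -/
import Mathlib

section
/- Let G be a finite group acting on a finite simplicial complex Δ, let Δ' be a G-stable subcomplex, and let f be an integer-valued function on subgroups of G that is constant on conjugacy classes of subgroups. If there exists a G-equivariant alternation φ of Δ' in Δ (i.e. φ : Δ∖Δ' → Δ∖Δ' with φ² = id, |φ(σ)| = |σ| ± 1, and φ(σ·g) = φ(σ)·g for all g ∈ G), then Σ_σ (−1)^{|σ|} f(G_σ) = Σ_{σ'} (−1)^{|σ'|} f(G_{σ'}), where σ runs over a set of representatives for the G-orbits on the simplices of Δ, σ' runs over representatives of G-orbits on Δ', and G_σ denotes the stabilizer of σ. -/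
open Pointwise

/-- Sum over a `G`-stable finset equals the orbit-weighted sum over a set of
orbit representatives, for any orbit-invariant weight. -/
lemma aux_orbit_sum {G V : Type*} [Group G] [Finite G] [MulAction G V] [DecidableEq V]
    (Δ R : Finset (Finset V)) (hR : R ⊆ Δ)
    (hstable : ∀ (g : G), ∀ σ ∈ Δ, g • σ ∈ Δ)
    (hRrep : ∀ σ ∈ Δ, ∃! ρ, ρ ∈ R ∧ ∃ g : G, g • σ = ρ)
    (w : Finset V → ℤ) (hw : ∀ (g : G) (σ : Finset V), w (g • σ) = w σ) :
    ∑ σ ∈ Δ, w σ = ∑ ρ ∈ R, (Nat.card (MulAction.orbit G ρ) : ℤ) * w ρ := by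
  classical
  have horb : ∀ ρ ∈ R, (MulAction.orbit G ρ : Set (Finset V))
      = ↑(Δ.filter (fun σ => σ ∈ MulAction.orbit G ρ)) := by
    intro ρ hρ
    ext σ
    simp only [Finset.coe_filter, Set.mem_setOf_eq]
    constructor
    · intro hσ
      refine ⟨?_, hσ⟩
      obtain ⟨g, rfl⟩ := hσ
      exact hstable g ρ (hR hρ)
    · exact fun h => h.2
  have hΔeq : Δ = R.biUnion (fun ρ => Δ.filter (fun σ => σ ∈ MulAction.orbit G ρ)) := by
    ext σ
    simp only [Finset.mem_biUnion, Finset.mem_filter]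
    constructor
    · intro hσ
      obtain ⟨ρ, ⟨hρR, g, hg⟩, _⟩ := hRrep σ hσ
      exact ⟨ρ, hρR, hσ, MulAction.mem_orbit_iff.mpr ⟨g⁻¹, by rw [← hg, inv_smul_smul]⟩⟩
    · rintro ⟨ρ, _, hσ, _⟩; exact hσ
  have hdisj : ∀ ρ₁ ∈ R, ∀ ρ₂ ∈ R, ρ₁ ≠ ρ₂ →
      Disjoint (Δ.filter (fun σ => σ ∈ MulAction.orbit G ρ₁))
        (Δ.filter (fun σ => σ ∈ MulAction.orbit G ρ₂)) := by
    intro ρ₁ h₁ ρ₂ h₂ hne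
    rw [Finset.disjoint_left]
    rintro σ hσ₁ hσ₂
    simp only [Finset.mem_filter] at hσ₁ hσ₂
    obtain ⟨g₁, hg₁⟩ := MulAction.mem_orbit_iff.mp hσ₁.2
    obtain ⟨g₂, hg₂⟩ := MulAction.mem_orbit_iff.mp hσ₂.2
    obtain ⟨ρ, _, huniq⟩ := hRrep σ hσ₁.1
    have e₁ : ρ₁ = ρ := huniq ρ₁ ⟨h₁, g₁⁻¹, by rw [← hg₁, inv_smul_smul]⟩
    have e₂ : ρ₂ = ρ := huniq ρ₂ ⟨h₂, g₂⁻¹, by rw [← hg₂, inv_smul_smul]⟩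
    exact hne (e₁.trans e₂.symm)
  rw [hΔeq, Finset.sum_biUnion hdisj]
  refine Finset.sum_congr rfl ?_
  intro ρ hρ
  have hconst : ∀ σ ∈ Δ.filter (fun σ => σ ∈ MulAction.orbit G ρ), w σ = w ρ := by
    intro σ hσ
    rw [Finset.mem_filter] at hσ
    obtain ⟨g, hg⟩ := MulAction.mem_orbit_iff.mp hσ.2
    rw [← hg, hw]
  have hcardeq : ((Δ.filter (fun σ => σ ∈ MulAction.orbit G ρ)).card : ℤ)
      = (Nat.card (MulAction.orbit G ρ) : ℤ) := by
    congr 1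
    calc (Δ.filter (fun σ => σ ∈ MulAction.orbit G ρ)).card
        = (↑(Δ.filter (fun σ => σ ∈ MulAction.orbit G ρ)) : Set (Finset V)).ncard :=
          (Set.ncard_coe_finset _).symm
      _ = (MulAction.orbit G ρ : Set (Finset V)).ncard :=
          congrArg Set.ncard (horb ρ hρ).symm
      _ = Nat.card (MulAction.orbit G ρ) := (Nat.card_coe_set_eq _).symm
  rw [Finset.sum_congr rfl hconst, Finset.sum_const, nsmul_eq_mul, hcardeq]

/-- Cancellation for `G`-stable functions: if `φ` is a `G`-equivariant alternation of a
`G`-stable subcomplex `Δ'` in a finite `G`-simplicial complex `Δ`, and `f` is an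
integer-valued function on subgroups of `G` constant on conjugacy classes, then the
alternating sums of `f` over stabilizers of `G`-orbit representatives of simplices of
`Δ` and of `Δ'` coincide. -/
theorem stmt_1 {G V : Type*} [Group G] [Finite G] [MulAction G V] [DecidableEq V]
    (Δ Δ' : Finset (Finset V))
    (hΔ : ∀ σ ∈ Δ, σ.Nonempty ∧ ∀ τ, τ ⊆ σ → τ.Nonempty → τ ∈ Δ)
    (hΔ' : ∀ σ ∈ Δ', σ.Nonempty ∧ ∀ τ, τ ⊆ σ → τ.Nonempty → τ ∈ Δ')
    (hsub : Δ' ⊆ Δ)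
    (hΔstable : ∀ (g : G), ∀ σ ∈ Δ, g • σ ∈ Δ)
    (hΔ'stable : ∀ (g : G), ∀ σ ∈ Δ', g • σ ∈ Δ')
    (f : Subgroup G → ℤ)
    (hf : ∀ (g : G) (H : Subgroup G), f (Subgroup.map (MulAut.conj g).toMonoidHom H) = f H)
    (φ : Finset V → Finset V)
    (hmaps : ∀ σ ∈ Δ, σ ∉ Δ' → φ σ ∈ Δ ∧ φ σ ∉ Δ')
    (hinv : ∀ σ ∈ Δ, σ ∉ Δ' → φ (φ σ) = σ)
    (hdim : ∀ σ ∈ Δ, σ ∉ Δ' → (φ σ).card = σ.card + 1 ∨ σ.card = (φ σ).card + 1)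
    (hequiv : ∀ (g : G), ∀ σ ∈ Δ, σ ∉ Δ' → φ (g • σ) = g • φ σ)
    (R R' : Finset (Finset V)) (hR : R ⊆ Δ) (hR' : R' ⊆ Δ')
    (hRrep : ∀ σ ∈ Δ, ∃! ρ, ρ ∈ R ∧ ∃ g : G, g • σ = ρ)
    (hR'rep : ∀ σ ∈ Δ', ∃! ρ, ρ ∈ R' ∧ ∃ g : G, g • σ = ρ) :
    ∑ σ ∈ R, (-1 : ℤ) ^ (σ.card - 1) * f (MulAction.stabilizer G σ)
      = ∑ σ ∈ R', (-1 : ℤ) ^ (σ.card - 1) * f (MulAction.stabilizer G σ) := by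
  classical
  set w : Finset V → ℤ := fun σ =>
    (-1 : ℤ) ^ (σ.card - 1) * f (MulAction.stabilizer G σ)
      * (Nat.card (MulAction.stabilizer G σ) : ℤ) with hw_def
  -- w is orbit-invariant
  have hw : ∀ (g : G) (σ : Finset V), w (g • σ) = w σ := by
    intro g σ
    have hcard : (g • σ).card = σ.card := Finset.card_smul_finset g σ
    have hstab : MulAction.stabilizer G (g • σ)
        = (MulAction.stabilizer G σ).map (MulAut.conj g).toMonoidHom :=
      MulAction.stabilizer_smul_eq_stabilizer_map_conj g σ
    have hnc : Nat.card (MulAction.stabilizer G (g • σ))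
        = Nat.card (MulAction.stabilizer G σ) := by
      rw [hstab]
      exact Nat.card_congr
        ((MulAction.stabilizer G σ).equivMapOfInjective (MulAut.conj g).toMonoidHom
          (fun a b h => (MulAut.conj g).injective h)).symm.toEquiv
    simp only [hw_def]
    rw [hcard, hnc, hstab, hf]
  -- orbit size times weight equals |G| times the summand
  have horbw : ∀ (S : Finset (Finset V)), ∑ ρ ∈ S,
      (Nat.card (MulAction.orbit G ρ) : ℤ) * w ρ
      = (Nat.card G : ℤ) * ∑ ρ ∈ S, (-1 : ℤ) ^ (ρ.card - 1)
          * f (MulAction.stabilizer G ρ) := by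
    intro S
    rw [Finset.mul_sum]
    refine Finset.sum_congr rfl ?_
    intro ρ _
    have : (Nat.card (MulAction.orbit G ρ)) * (Nat.card (MulAction.stabilizer G ρ))
        = Nat.card G := by
      rw [Nat.card_congr (MulAction.orbitEquivQuotientStabilizer G ρ)]
      exact (Subgroup.card_eq_card_quotient_mul_card_subgroup
        (MulAction.stabilizer G ρ)).symm
    simp only [hw_def]
    push_cast [← this]
    ring
  have hsum : ∑ σ ∈ Δ, w σ = (Nat.card G : ℤ)
      * ∑ σ ∈ R, (-1 : ℤ) ^ (σ.card - 1) * f (MulAction.stabilizer G σ) := by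
    rw [aux_orbit_sum Δ R hR hΔstable hRrep w hw, horbw]
  have hsum' : ∑ σ ∈ Δ', w σ = (Nat.card G : ℤ)
      * ∑ σ ∈ R', (-1 : ℤ) ^ (σ.card - 1) * f (MulAction.stabilizer G σ) := by
    rw [aux_orbit_sum Δ' R' hR' hΔ'stable hR'rep w hw, horbw]
  -- the sum over Δ \ Δ' vanishes by the involution φ
  have hcancel : ∑ σ ∈ Δ \ Δ', w σ = 0 := by
    refine Finset.sum_involution (fun σ _ => φ σ) ?_ ?_ ?_ ?_
    · intro σ hσ
      rw [Finset.mem_sdiff] at hσ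
      obtain ⟨hσΔ, hσΔ'⟩ := hσ
      -- stabilizers agree
      have hstab : MulAction.stabilizer G (φ σ) = MulAction.stabilizer G σ := by
        ext g
        simp only [MulAction.mem_stabilizer_iff]
        constructor
        · intro hg
          have h1 : φ (g • φ σ) = g • φ (φ σ) :=
            hequiv g (φ σ) (hmaps σ hσΔ hσΔ').1 (hmaps σ hσΔ hσΔ').2
          rw [hg, hinv σ hσΔ hσΔ'] at h1
          exact h1.symm
        · intro hg
          have h1 : φ (g • σ) = g • φ σ := hequiv g σ hσΔ hσΔ'
          rw [hg] at h1
          exact h1.symm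
      -- signs are opposite
      have hσne : 1 ≤ σ.card := Finset.card_pos.mpr (hΔ σ hσΔ).1
      have hφne : 1 ≤ (φ σ).card :=
        Finset.card_pos.mpr (hΔ (φ σ) (hmaps σ hσΔ hσΔ').1).1
      have hsign : (-1 : ℤ) ^ ((φ σ).card - 1) = -(-1 : ℤ) ^ (σ.card - 1) := by
        rcases hdim σ hσΔ hσΔ' with h | h
        · rw [h]
          have : σ.card + 1 - 1 = (σ.card - 1) + 1 := by omega
          rw [this, pow_succ]
          ring
        · rw [h] at hσne ⊢
          have : (φ σ).card + 1 - 1 = ((φ σ).card - 1) + 1 := by omega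
          rw [this, pow_succ]
          ring
      simp only [hw_def, hstab, hsign]
      ring
    · intro σ hσ _
      rw [Finset.mem_sdiff] at hσ
      intro heq
      have heq' : φ σ = σ := heq
      rcases hdim σ hσ.1 hσ.2 with h | h <;> rw [heq'] at h <;> omega
    · intro σ hσ
      rw [Finset.mem_sdiff] at hσ ⊢
      exact hmaps σ hσ.1 hσ.2
    · intro σ hσ
      rw [Finset.mem_sdiff] at hσ
      exact hinv σ hσ.1 hσ.2
  have hsplit : ∑ σ ∈ Δ \ Δ', w σ + ∑ σ ∈ Δ', w σ = ∑ σ ∈ Δ, w σ :=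
    Finset.sum_sdiff hsub
  have hGpos : (0 : ℤ) < (Nat.card G : ℤ) := by
    exact_mod_cast Nat.card_pos
  have : (Nat.card G : ℤ)
      * ∑ σ ∈ R, (-1 : ℤ) ^ (σ.card - 1) * f (MulAction.stabilizer G σ)
      = (Nat.card G : ℤ)
      * ∑ σ ∈ R', (-1 : ℤ) ^ (σ.card - 1) * f (MulAction.stabilizer G σ) := by
    rw [← hsum, ← hsum', ← hsplit, hcancel, zero_add]
  exact mul_left_cancel₀ hGpos.ne' this
end

section
/- Let G be a finite group, ℓ a prime dividing |G|, and Z a central ℓ-subgroup of G. Let Δ(S_ℓ(G,Z)) be the simplicial complex whose n-simplices are chains Z = P₀ < P₁ < ⋯ < Pₙ of ℓ-subgroups of G starting at Z, and let Δ(Ab_{ℓ,Z}(G,Z)) be the subcomplex of chains all of whose terms P satisfy that P/Z is abelian. Then for every group A of automorphisms of G stabilizing Z, there exists an A-equivariant alternation of Δ(Ab_{ℓ,Z}(G,Z)) in Δ(S_ℓ(G,Z)): a map φ on the set of chains in Δ(S_ℓ(G,Z)) whose top term Pₙ has non-abelian quotient Pₙ/Z, satisfying φ² = id, |φ(σ)|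 = |σ| ± 1, φ commutes with the action of A, and φ preserves the stabilizer (the top term of φ(σ) equals Pₙ). -/
/-!
Write `D = [Pₙ, Pₙ]`. The terms of a chain not containing `D` end at some `B = P_{m-1}`, those
containing `D` start at `T = P_m`, and `B < D ⊔ B ≤ T`; `φ` inserts `D ⊔ B` when it is strictly
below `T` and removes `T` when `T = D ⊔ B`. This is an involution as long as the removed term is
never the top `Pₙ`, i.e. `D ⊔ B < Pₙ` for every `B < Pₙ`. That is the Frattini argument: in the
finite `ℓ`-group `Pₙ` a maximal subgroup `M` is normal and `Pₙ = M⟨g⟩` for any `g ∉ M`, so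
`Pₙ/M` is cyclic and `D ≤ M`.
As `φ` is defined purely in terms of the subgroup lattice and `D`, it commutes with every
automorphism of `G`.
-/

/-- `P/Z` is abelian, expressed by commutators of elements of `P` lying in `Z`. -/
def AbelianModulo {G : Type*} [Group G] (P Z : Subgroup G) : Prop :=
  ∀ p ∈ P, ∀ q ∈ P, p * q * p⁻¹ * q⁻¹ ∈ Z

/-- A chain of `ℓ`-subgroups of `G` starting at `Z`: a finite totally ordered set of
`ℓ`-subgroups of `G` containing `Z`, all of which contain `Z`. -/
def IsEllChain {G : Type*} [Group G] (ℓ : ℕ) (Z : Subgroup G)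
    (σ : Finset (Subgroup G)) : Prop :=
  Z ∈ σ ∧ (∀ P ∈ σ, Z ≤ P ∧ IsPGroup ℓ P) ∧ IsChain (· ≤ ·) (σ : Set (Subgroup G))

lemma IsChain.supClosed {α : Type*} [SemilatticeSup α] {s : Set α}
    (hs : IsChain (· ≤ ·) s) : SupClosed s := fun a ha b hb => by
  rcases hs.total ha hb with h | h
  · rwa [sup_eq_right.2 h]
  · rwa [sup_eq_left.2 h]

lemma IsChain.infClosed {α : Type*} [SemilatticeInf α] {s : Set α}
    (hs : IsChain (· ≤ ·) s) : InfClosed s := fun a ha b hb => by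
  rcases hs.total ha hb with h | h
  · rwa [inf_eq_left.2 h]
  · rwa [inf_eq_right.2 h]

namespace Finset

variable {α β : Type*} [Lattice α] [BoundedOrder α] {σ : Finset α} {d p q r : α}

open Classical in
noncomputable def lowerCut (σ : Finset α) (d : α) : α := (σ.filter (¬ d ≤ ·)).sup id

open Classical in
noncomputable def upperCut (σ : Finset α) (d : α) : α := (σ.filter (d ≤ ·)).inf id

lemma le_upperCut : d ≤ σ.upperCut d := by
  classical
  exact Finset.le_inf fun _ hq => (mem_filter.1 hq).2

lemma upperCut_le (hq : q ∈ σ) (hdq : d ≤ q) : σ.upperCut d ≤ q := by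
  classical
  exact inf_le (f := id) (mem_filter.2 ⟨hq, hdq⟩)

lemma isGreatest_lowerCut (hσ : IsChain (· ≤ ·) (σ : Set α)) (h : ∃ q ∈ σ, ¬ d ≤ q) :
    IsGreatest {q | q ∈ σ ∧ ¬ d ≤ q} (σ.lowerCut d) := by
  classical
  obtain ⟨q, hq, hdq⟩ := h
  have hchain := hσ.mono (coe_subset.2 (filter_subset (¬ d ≤ ·) σ))
  refine ⟨?_, fun x hx => le_sup (f := id) (mem_filter.2 hx)⟩
  simpa [lowerCut] using hchain.supClosed.finsetSup_mem ⟨q, mem_filter.2 ⟨hq, hdq⟩⟩ (f := id)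
    fun i hi => hi

lemma isLeast_upperCut (hσ : IsChain (· ≤ ·) (σ : Set α)) (h : ∃ q ∈ σ, d ≤ q) :
    IsLeast {q | q ∈ σ ∧ d ≤ q} (σ.upperCut d) := by
  classical
  obtain ⟨q, hq, hdq⟩ := h
  have hchain := hσ.mono (coe_subset.2 (filter_subset (d ≤ ·) σ))
  refine ⟨⟨?_, le_upperCut⟩, fun x hx => upperCut_le hx.1 hx.2⟩
  simpa [upperCut] using hchain.infClosed.finsetInf_mem ⟨q, mem_filter.2 ⟨hq, hdq⟩⟩ (f := id)
    fun i hi => hi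

lemma le_lowerCut_or_upperCut_le (hσ : IsChain (· ≤ ·) (σ : Set α))
    (hlow : ∃ q ∈ σ, ¬ d ≤ q) (hq : q ∈ σ) : q ≤ σ.lowerCut d ∨ σ.upperCut d ≤ q := by
  by_cases hdq : d ≤ q
  · exact .inr (upperCut_le hq hdq)
  · exact .inl ((isGreatest_lowerCut hσ hlow).2 ⟨hq, hdq⟩)

lemma lowerCut_lt_upperCut (hσ : IsChain (· ≤ ·) (σ : Set α)) (hlow : ∃ q ∈ σ, ¬ d ≤ q)
    (hup : ∃ q ∈ σ, d ≤ q) : σ.lowerCut d < σ.upperCut d := by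
  obtain ⟨hb, hdb⟩ := (isGreatest_lowerCut hσ hlow).1
  refine lt_of_le_of_ne ?_ fun h => hdb (h ▸ le_upperCut)
  exact (hσ.total hb (isLeast_upperCut hσ hup).1.1).resolve_right
    fun h => hdb (le_upperCut.trans h)

lemma sup_lowerCut_notMem (hσ : IsChain (· ≤ ·) (σ : Set α)) (hlow : ∃ q ∈ σ, ¬ d ≤ q)
    (h : d ⊔ σ.lowerCut d < σ.upperCut d) : d ⊔ σ.lowerCut d ∉ σ := fun hr =>
  (le_lowerCut_or_upperCut_le hσ hlow hr).elim
    (fun hb => (isGreatest_lowerCut hσ hlow).1.2 (le_sup_left.trans hb)) h.not_ge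

lemma upperCut_ne_of_not_lt (hσ : IsChain (· ≤ ·) (σ : Set α)) (hlow : ∃ q ∈ σ, ¬ d ≤ q)
    (hp : IsGreatest (σ : Set α) p) (hdp : d ≤ p) (hfrat : ∀ b < p, d ⊔ b < p)
    (h : ¬ d ⊔ σ.lowerCut d < σ.upperCut d) : σ.upperCut d ≠ p := by
  rintro ht
  obtain ⟨hb, hdb⟩ := (isGreatest_lowerCut hσ hlow).1
  exact h (ht ▸ hfrat _ (lt_of_le_of_ne (hp.2 hb) fun e => hdb (e ▸ hdp)))

open Classical in
/-- For `d = [Pₙ, Pₙ]` this is the paper's `φ`: `upperCut` is `P_m` and `lowerCut` is `P_{m-1}`. -/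
noncomputable def toggle [DecidableEq α] (σ : Finset α) (d : α) : Finset α :=
  if d ⊔ σ.lowerCut d < σ.upperCut d then insert (d ⊔ σ.lowerCut d) σ
  else σ.erase (σ.upperCut d)

lemma lowerCut_image [Lattice β] [BoundedOrder β] [DecidableEq β] (e : α ≃o β) :
    (σ.image e).lowerCut (e d) = e (σ.lowerCut d) := by
  classical
  simp [lowerCut, filter_image, sup_image, map_finset_sup]

lemma upperCut_image [Lattice β] [BoundedOrder β] [DecidableEq β] (e : α ≃o β) :
    (σ.image e).upperCut (e d) = e (σ.upperCut d) := by
  classical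
  simp [upperCut, filter_image, inf_image, map_finset_inf]

variable [DecidableEq α]

lemma toggle_image [Lattice β] [BoundedOrder β] [DecidableEq β] (e : α ≃o β) :
    (σ.image e).toggle (e d) = (σ.toggle d).image e := by
  unfold toggle
  rw [lowerCut_image, upperCut_image, ← map_sup, e.lt_iff_lt]
  split_ifs
  · rw [image_insert]
  · rw [image_erase e.injective]

lemma toggle_of_lt (h : d ⊔ σ.lowerCut d < σ.upperCut d) :
    σ.toggle d = insert (d ⊔ σ.lowerCut d) σ := if_pos h

lemma toggle_of_not_lt (h : ¬ d ⊔ σ.lowerCut d < σ.upperCut d) :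
    σ.toggle d = σ.erase (σ.upperCut d) := if_neg h

lemma lowerCut_insert_of_le (h : d ≤ r) : (insert r σ).lowerCut d = σ.lowerCut d := by
  simp [lowerCut, filter_insert, h]

lemma lowerCut_erase_of_le (h : d ≤ r) : (σ.erase r).lowerCut d = σ.lowerCut d := by
  classical
  unfold lowerCut
  rw [filter_erase, erase_eq_of_notMem]
  exact fun hr => (mem_filter.1 hr).2 h

lemma upperCut_insert_of_le (h : d ≤ r) (hr : r ≤ σ.upperCut d) :
    (insert r σ).upperCut d = r := by
  simpa [upperCut, filter_insert, h] using hr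

lemma mem_toggle_of_not_le (hq : q ∈ σ) (hdq : ¬ d ≤ q) : q ∈ σ.toggle d := by
  unfold toggle
  split_ifs
  · exact mem_insert_of_mem hq
  · exact mem_erase.2 ⟨fun h => hdq (h ▸ le_upperCut), hq⟩

lemma isGreatest_toggle (hσ : IsChain (· ≤ ·) (σ : Set α)) (hlow : ∃ q ∈ σ, ¬ d ≤ q)
    (hp : IsGreatest (σ : Set α) p) (hdp : d ≤ p) (hfrat : ∀ b < p, d ⊔ b < p) :
    IsGreatest (σ.toggle d : Set α) p := by
  by_cases h : d ⊔ σ.lowerCut d < σ.upperCut d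
  · rw [toggle_of_lt h, coe_insert]
    refine ⟨Set.mem_insert_of_mem _ hp.1, ?_⟩
    rw [upperBounds_insert]
    exact ⟨h.le.trans (upperCut_le hp.1 hdp), hp.2⟩
  · rw [toggle_of_not_lt h, coe_erase]
    exact ⟨⟨hp.1, (upperCut_ne_of_not_lt hσ hlow hp hdp hfrat h).symm⟩,
      fun q hq => hp.2 hq.1⟩

lemma exists_le_le_of_mem_toggle (hσ : IsChain (· ≤ ·) (σ : Set α))
    (hlow : ∃ q ∈ σ, ¬ d ≤ q) (hup : ∃ q ∈ σ, d ≤ q) (hq : q ∈ σ.toggle d) :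
    ∃ b ∈ σ, ∃ t ∈ σ, b ≤ q ∧ q ≤ t := by
  unfold toggle at hq
  split_ifs at hq with h
  · rcases mem_insert.1 hq with rfl | hq
    · exact ⟨_, (isGreatest_lowerCut hσ hlow).1.1, _, (isLeast_upperCut hσ hup).1.1,
        le_sup_right, h.le⟩
    · exact ⟨q, hq, q, hq, le_rfl, le_rfl⟩
  · exact ⟨q, mem_of_mem_erase hq, q, mem_of_mem_erase hq, le_rfl, le_rfl⟩

lemma isChain_toggle (hσ : IsChain (· ≤ ·) (σ : Set α)) (hlow : ∃ q ∈ σ, ¬ d ≤ q) :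
    IsChain (· ≤ ·) (σ.toggle d : Set α) := by
  unfold toggle
  split_ifs with h
  · rw [coe_insert]
    refine hσ.insert fun q hq _ => ?_
    rcases le_lowerCut_or_upperCut_le hσ hlow hq with hq | hq
    · exact .inr (hq.trans le_sup_right)
    · exact .inl (h.le.trans hq)
  · exact hσ.mono (coe_subset.2 (erase_subset _ _))

lemma toggle_toggle (hσ : IsChain (· ≤ ·) (σ : Set α)) (hlow : ∃ q ∈ σ, ¬ d ≤ q)
    (hp : IsGreatest (σ : Set α) p) (hdp : d ≤ p) (hfrat : ∀ b < p, d ⊔ b < p) :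
    (σ.toggle d).toggle d = σ := by
  by_cases h : d ⊔ σ.lowerCut d < σ.upperCut d
  · have hr : d ≤ d ⊔ σ.lowerCut d := le_sup_left
    rw [toggle_of_lt h, toggle_of_not_lt, upperCut_insert_of_le hr h.le,
      erase_insert (sup_lowerCut_notMem hσ hlow h)]
    rw [lowerCut_insert_of_le hr, upperCut_insert_of_le hr h.le]
    exact lt_irrefl _
  · obtain ⟨ht, hdt⟩ := (isLeast_upperCut hσ ⟨p, hp.1, hdp⟩).1
    have heq : d ⊔ σ.lowerCut d = σ.upperCut d :=
      (sup_le hdt (lowerCut_lt_upperCut hσ hlow ⟨p, hp.1, hdp⟩).le).eq_of_not_lt h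
    have hp' : p ∈ σ.erase (σ.upperCut d) :=
      mem_erase.2 ⟨(upperCut_ne_of_not_lt hσ hlow hp hdp hfrat h).symm, hp.1⟩
    obtain ⟨hu, hdu⟩ := (isLeast_upperCut (hσ.mono (coe_subset.2 (erase_subset _ _)))
      ⟨p, hp', hdp⟩).1
    have hlt : σ.upperCut d < (σ.erase (σ.upperCut d)).upperCut d :=
      lt_of_le_of_ne (upperCut_le (mem_of_mem_erase hu) hdu) (ne_of_mem_erase hu).symm
    rw [toggle_of_not_lt h, toggle_of_lt, lowerCut_erase_of_le hdt, heq, insert_erase ht]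
    rwa [lowerCut_erase_of_le hdt, heq]

lemma card_toggle (hσ : IsChain (· ≤ ·) (σ : Set α)) (hlow : ∃ q ∈ σ, ¬ d ≤ q)
    (hup : ∃ q ∈ σ, d ≤ q) :
    (σ.toggle d).card = σ.card + 1 ∨ σ.card = (σ.toggle d).card + 1 := by
  by_cases h : d ⊔ σ.lowerCut d < σ.upperCut d
  · exact .inl (by rw [toggle_of_lt h, card_insert_of_notMem (sup_lowerCut_notMem hσ hlow h)])
  · exact .inr (by rw [toggle_of_not_lt h, card_erase_add_one (isLeast_upperCut hσ hup).1.1])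

end Finset

section Commutator

variable {G : Type*} [Group G]

lemma abelianModulo_iff_commutator_le {P Z : Subgroup G} :
    AbelianModulo P Z ↔ ⁅P, P⁆ ≤ Z := by
  simp only [AbelianModulo, Subgroup.commutator_le, commutatorElement_def]

lemma commutator_le_of_isCoatom [Group.IsNilpotent G] {M : Subgroup G} (hM : IsCoatom M) :
    commutator G ≤ M := by
  have : M.Normal :=
    Subgroup.NormalizerCondition.normal_of_coatom _ Group.normalizerCondition_of_isNilpotent hM
  obtain ⟨g, -, hg⟩ := SetLike.exists_of_lt hM.lt_top
  -- `M ⊔ ⟨g⟩ = ⊤`, so `G / M` is a quotient of the cyclic group `⟨g⟩`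
  refine this.commutator_le_of_self_sup_commutative_eq_top (H := Subgroup.zpowers g) ?_
    inferInstance
  exact hM.2 _ (left_lt_sup.2 fun h => hg (h (Subgroup.mem_zpowers g)))

lemma commutator_le_frattini [Group.IsNilpotent G] :
    commutator G ≤ frattini G :=
  le_iInf₂ fun _ hM => commutator_le_of_isCoatom hM

lemma Subgroup.commutator_sup_lt {P B : Subgroup G} [Group.IsNilpotent P]
    [IsCoatomic (Subgroup P)] (hB : B < P) : ⁅P, P⁆ ⊔ B < P := by
  refine lt_of_le_of_ne (sup_le P.commutator_le_self hB.le) fun h => hB.not_ge ?_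
  rw [← subgroupOf_eq_top]
  refine frattini_nongenerating (top_le_iff.1 ?_)
  calc ⊤ = (⁅P, P⁆ ⊔ B).subgroupOf P := by rw [h, subgroupOf_self]
    _ = _root_.commutator P ⊔ B.subgroupOf P := by
      rw [subgroupOf_sup P.commutator_le_self hB.le, ← P.map_subtype_commutator, subgroupOf,
        comap_map_eq_self_of_injective P.subtype_injective]
    _ ≤ B.subgroupOf P ⊔ frattini P := by
      rw [sup_comm]
      exact sup_le_sup_left (commutator_le_frattini (G := P)) _

end Commutator

section CommutatorToggle

variable {G : Type*} [Group G] [DecidableEq (Subgroup G)]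

lemma isEllChain_toggle {ℓ : ℕ} {Z d : Subgroup G} {σ : Finset (Subgroup G)}
    (hσ : IsEllChain ℓ Z σ) (hdZ : ¬ d ≤ Z) (hup : ∃ Q ∈ σ, d ≤ Q) :
    IsEllChain ℓ Z (σ.toggle d) := by
  obtain ⟨hZ, hmem, hchain⟩ := hσ
  refine ⟨Finset.mem_toggle_of_not_le hZ hdZ, fun Q hQ => ?_,
    Finset.isChain_toggle hchain ⟨Z, hZ, hdZ⟩⟩
  obtain ⟨B, hB, T, hT, hBQ, hQT⟩ :=
    Finset.exists_le_le_of_mem_toggle hchain ⟨Z, hZ, hdZ⟩ hup hQ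
  exact ⟨(hmem B hB).1.trans hBQ, (hmem T hT).2.to_le hQT⟩

noncomputable def commutatorToggle (σ : Finset (Subgroup G)) : Finset (Subgroup G) :=
  σ.toggle ⁅σ.sup id, σ.sup id⁆

lemma commutatorToggle_eq {σ : Finset (Subgroup G)} {P : Subgroup G}
    (hP : IsGreatest (σ : Set (Subgroup G)) P) : commutatorToggle σ = σ.toggle ⁅P, P⁆ := by
  rw [commutatorToggle, Finset.isLUB_sup_id.unique hP.isLUB]

lemma commutatorToggle_image (σ : Finset (Subgroup G)) (α : MulAut G) :
    commutatorToggle (σ.image (Subgroup.map α.toMonoidHom)) =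
      (commutatorToggle σ).image (Subgroup.map α.toMonoidHom) := by
  have hsup : (σ.image α.mapSubgroup).sup id = α.mapSubgroup (σ.sup id) := by
    simp [map_finset_sup]
  rw [← MulEquiv.coe_mapSubgroup, commutatorToggle, commutatorToggle, ← Finset.toggle_image,
    hsup, MulEquiv.coe_mapSubgroup, Subgroup.map_commutator]

end CommutatorToggle

theorem stmt_4_general {G : Type*} [Group G] [Finite G] [DecidableEq (Subgroup G)]
    (ℓ : ℕ) (hℓ : ℓ.Prime)
    (Z : Subgroup G) :
    ∃ φ : Finset (Subgroup G) → Finset (Subgroup G),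
      ∀ σ : Finset (Subgroup G), IsEllChain ℓ Z σ →
        ∀ P ∈ σ, (∀ Q ∈ σ, Q ≤ P) → ¬ AbelianModulo P Z →
          IsEllChain ℓ Z (φ σ) ∧
          (P ∈ φ σ ∧ ∀ Q ∈ φ σ, Q ≤ P) ∧
          φ (φ σ) = σ ∧
          ((φ σ).card = σ.card + 1 ∨ σ.card = (φ σ).card + 1) ∧
          ∀ α : MulAut G, Subgroup.map α.toMonoidHom Z = Z →
            φ (σ.image (Subgroup.map α.toMonoidHom)) =
              (φ σ).image (Subgroup.map α.toMonoidHom) := by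
  refine ⟨commutatorToggle, fun σ hσ P hP htop hna => ?_⟩
  have hPσ : IsGreatest (σ : Set (Subgroup G)) P := ⟨hP, htop⟩
  have hdZ : ¬ ⁅P, P⁆ ≤ Z := mt abelianModulo_iff_commutator_le.2 hna
  have hdP : ⁅P, P⁆ ≤ P := P.commutator_le_self
  have hfrat : ∀ B < P, ⁅P, P⁆ ⊔ B < P := by
    have := Fact.mk hℓ
    have := (hσ.2.1 P hP).2.isNilpotent
    exact fun B => Subgroup.commutator_sup_lt
  have hlow : ∃ Q ∈ σ, ¬ ⁅P, P⁆ ≤ Q := ⟨Z, hσ.1, hdZ⟩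
  have hτ := Finset.isGreatest_toggle hσ.2.2 hlow hPσ hdP hfrat
  have hφ := commutatorToggle_eq hPσ
  refine ⟨hφ ▸ isEllChain_toggle hσ hdZ ⟨P, hP, hdP⟩, hφ ▸ hτ, ?_,
    hφ ▸ Finset.card_toggle hσ.2.2 hlow ⟨P, hP, hdP⟩, fun α _ => commutatorToggle_image σ α⟩
  rw [hφ, commutatorToggle_eq hτ, Finset.toggle_toggle hσ.2.2 hlow hPσ hdP hfrat]

/-- Existence of an equivariant alternation of the subcomplex of chains with abelian
quotients `P/Z` inside the complex of all chains of `ℓ`-subgroups starting at a central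
`ℓ`-subgroup `Z`: an involution `φ`, commuting with every automorphism of `G`
stabilizing `Z`, defined on chains whose top term `P` has non-abelian quotient `P/Z`,
changing the length by exactly one and preserving the top term. -/
theorem stmt_4 {G : Type*} [Group G] [Finite G] [DecidableEq (Subgroup G)]
    (ℓ : ℕ) (hℓ : ℓ.Prime) (hdvd : ℓ ∣ Nat.card G)
    (Z : Subgroup G) (hZc : Z ≤ Subgroup.center G) (hZp : IsPGroup ℓ Z) :
    ∃ φ : Finset (Subgroup G) → Finset (Subgroup G),
      ∀ σ : Finset (Subgroup G), IsEllChain ℓ Z σ →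
        ∀ P ∈ σ, (∀ Q ∈ σ, Q ≤ P) → ¬ AbelianModulo P Z →
          IsEllChain ℓ Z (φ σ) ∧
          (P ∈ φ σ ∧ ∀ Q ∈ φ σ, Q ≤ P) ∧
          φ (φ σ) = σ ∧
          ((φ σ).card = σ.card + 1 ∨ σ.card = (φ σ).card + 1) ∧
          ∀ α : MulAut G, Subgroup.map α.toMonoidHom Z = Z →
            φ (σ.image (Subgroup.map α.toMonoidHom)) =
              (φ σ).image (Subgroup.map α.toMonoidHom) :=
  stmt_4_general ℓ hℓ Z
end
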